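/- arXiv:2002.07559 — 4 statements merged into one kernel-verified Lean document; each statement's English description precedes it below -/
import Mathlib

section
/- Let μ be a Borel probability measure on ℚ_p, and suppose for some n ∈ ℤ and all x with |x|_p = p^{-n} the measure ν = μ * μ₋ satisfies ν(B(x, p^{-k})) = 0 for all k ≥ n+1 (i.e., the sphere S(0, p^{-n}) consists of zeros of the distribution μ*μ₋). Then for any ξ ∈ ℚ_p, any x with |x|_p = p^{-n}, and any k ≥ n+1: μ(B(ξ, p^{-k})) · μ(B(ξ - x, p^{-k})) = 0. -/
/-!
Write `ν = μ * μ₋` and `r = p^{-k}`. By the ultrametric inequality,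
`B(ξ, r) + B(x - ξ, r) ⊆ B(x, r)`, so `ν(B(x, r)) ≥ μ(B(ξ, r)) · μ₋(B(x - ξ, r))`, and
`μ₋(B(x - ξ, r)) = μ(B(ξ - x, r))`. The left-hand side vanishes by hypothesis.
-/

open MeasureTheory Metric Pointwise

theorem IsUltrametricDist.closedBall_add_closedBall_subset {G : Type*}
    [SeminormedAddCommGroup G] [IsUltrametricDist G] (a b : G) (r : ℝ) :
    closedBall a r + closedBall b r ⊆ closedBall (a + b) r := by
  refine Set.add_subset_iff.2 fun y hy z hz => ?_
  rw [mem_closedBall_iff_norm] at hy hz ⊢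
  calc ‖y + z - (a + b)‖ = ‖(y - a) + (z - b)‖ := by rw [add_sub_add_comm]
    _ ≤ max ‖y - a‖ ‖z - b‖ := IsUltrametricDist.norm_add_le_max _ _
    _ ≤ r := max_le hy hz

theorem MeasureTheory.Measure.mul_le_map_add_prod {G : Type*} [Add G] [MeasurableSpace G]
    [MeasurableAdd₂ G] (μ ν : Measure G) [SFinite ν] {s t u : Set G} (h : s + t ⊆ u) :
    μ s * ν t ≤ Measure.map (fun q : G × G => q.1 + q.2) (μ.prod ν) u := by
  rw [← Measure.prod_prod]
  calc μ.prod ν (s ×ˢ t) ≤ μ.prod ν ((fun q : G × G => q.1 + q.2) ⁻¹' u) :=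
        measure_mono fun q hq => h (Set.add_mem_add hq.1 hq.2)
    _ ≤ _ := Measure.le_map_apply (by fun_prop) u

/-- If the sphere `S(0, p^{-n})` consists of zeros of `μ * μ₋` (where `μ₋` is
the reflection of `μ`), then for every `ξ`, every `x` with `|x|_p = p^{-n}` and
every `k ≥ n+1`, `μ(B(ξ, p^{-k})) · μ(B(ξ - x, p^{-k})) = 0`. -/
theorem stmt11 (p : ℕ) [Fact p.Prime] [MeasurableSpace ℚ_[p]] [BorelSpace ℚ_[p]]
    (μ : Measure ℚ_[p]) [IsProbabilityMeasure μ] (n : ℤ)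
    (hzero : ∀ x : ℚ_[p], ‖x‖ = (p : ℝ) ^ (-n) → ∀ k : ℤ, n + 1 ≤ k →
      Measure.map (fun q : ℚ_[p] × ℚ_[p] => q.1 + q.2)
          (μ.prod (Measure.map (fun y : ℚ_[p] => -y) μ))
        {z : ℚ_[p] | ‖z - x‖ ≤ (p : ℝ) ^ (-k)} = 0) :
    ∀ (ξ x : ℚ_[p]), ‖x‖ = (p : ℝ) ^ (-n) → ∀ k : ℤ, n + 1 ≤ k →
      μ {z : ℚ_[p] | ‖z - ξ‖ ≤ (p : ℝ) ^ (-k)} *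
        μ {z : ℚ_[p] | ‖z - (ξ - x)‖ ≤ (p : ℝ) ^ (-k)} = 0 := by
  intro ξ x hx k hk
  set r : ℝ := (p : ℝ) ^ (-k)
  have hν := hzero x hx k hk
  simp only [← mem_closedBall_iff_norm, Set.ofPred_mem_eq] at hν ⊢
  have hreflect : Measure.map (fun y : ℚ_[p] => -y) μ (closedBall (x - ξ) r) =
      μ (closedBall (ξ - x) r) := by
    rw [← Measure.neg, Measure.neg_apply, neg_closedBall, neg_sub]
  have hsum : closedBall ξ r + closedBall (x - ξ) r ⊆ closedBall x r := by
    simpa using IsUltrametricDist.closedBall_add_closedBall_subset ξ (x - ξ) r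
  rw [← hreflect, ← nonpos_iff_eq_zero, ← hν]
  exact Measure.mul_le_map_add_prod _ _ hsum
end

section
/- Let p be prime and let H = (e^{2πi c d / p^γ})_{c∈C, d∈D} be a square complex Hadamard matrix indexed by finite sets C, D ⊂ ℤ/p^γℤ with 0 ∈ C. Then the columns of the matrix H* obtained by deleting the row indexed by 0 sum to the zero vector, and any #D − 1 of these columns are linearly independent over ℂ; consequently the kernel of H* is the one-dimensional span of the all-ones vector. -/
open scoped BigOperators

/-- The entry `e^{2πi c d / p^γ}` of the matrix `H`, for `c, d ∈ ℤ/p^γℤ`. -/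
noncomputable def hadEntry (p γ : ℕ) (c d : ZMod (p ^ γ)) : ℂ :=
  Complex.exp (2 * Real.pi * Complex.I * (((c * d).val : ℕ) : ℂ) / ((p : ℂ) ^ γ))

/-!
The row of `H` indexed by `0` is the all-ones row, so orthogonality of any other row to it says
that this row sums to zero. Since `H` is square, `H H† = #C • 1` also gives `H† H = #C • 1`.
If `H* u = 0`, then `H u` vanishes off row `0`, where it equals `∑ u`; hence
`#C • u = H† (H u) = (∑ u) • 1`, so the kernel of `H*` is spanned by the all-ones vector.
A vanishing combination of the columns of `H*` other than column `d₀` is a kernel vector that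
vanishes at `d₀`, hence is zero.
-/

namespace Matrix

variable {m n K : Type*} [Fintype m] [Fintype n] [DecidableEq m] [DecidableEq n] [Field K]

theorem mul_eq_smul_one_comm_of_equiv {A : Matrix m n K} {B : Matrix n m K} {c : K}
    (e : m ≃ n) (hc : c ≠ 0) : A * B = c • 1 ↔ B * A = c • 1 := by
  rw [← inv_smul_eq_iff₀ hc, ← inv_smul_eq_iff₀ hc, ← Matrix.mul_smul, ← Matrix.smul_mul,
    mul_eq_one_comm_of_equiv e]

variable [StarRing K] {H : Matrix m n K} {c : K} {i₀ : m}

theorem exists_eq_const_of_mulVec_eq_zero_off {u : n → K}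
    (hH : Hᴴ * H = c • 1) (hc : c ≠ 0) (hrow : H i₀ = 1) (hu : ∀ i ≠ i₀, (H *ᵥ u) i = 0) :
    ∃ a, ∀ j, u j = a := by
  have hHu : H *ᵥ u = Pi.single i₀ (∑ j, u j) := by
    ext i
    rcases eq_or_ne i i₀ with rfl | hi
    · simp [mulVec, dotProduct, hrow]
    · simp [hu i hi, hi]
  have hcu : c • u = fun _ => ∑ j, u j := by
    calc c • u = (Hᴴ * H) *ᵥ u := by rw [hH, smul_mulVec, one_mulVec]
      _ = Hᴴ *ᵥ Pi.single i₀ (∑ j, u j) := by rw [← mulVec_mulVec, hHu]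
      _ = fun _ => ∑ j, u j := by ext; simp [hrow]
  refine ⟨c⁻¹ * ∑ j, u j, fun j => ?_⟩
  rw [eq_inv_mul_iff_mul_eq₀ hc]
  exact congrFun hcu j

theorem mulVec_eq_zero_off_iff_eq_const {u : n → K}
    (hrows : H * Hᴴ = c • 1) (hcols : Hᴴ * H = c • 1) (hc : c ≠ 0) (hrow : H i₀ = 1) :
    (∀ i ≠ i₀, (H *ᵥ u) i = 0) ↔ ∃ a, ∀ j, u j = a := by
  refine ⟨exists_eq_const_of_mulVec_eq_zero_off hcols hc hrow, ?_⟩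
  rintro ⟨a, ha⟩ i hi
  have hsum : ∑ j, H i j = 0 := by
    simpa [mul_apply, hrow, hi] using congrFun (congrFun hrows i) i₀
  simp only [mulVec, dotProduct, ha, ← Finset.sum_mul, hsum, zero_mul]

theorem linearIndependent_submatrix_cols {ρ ι : Type*} {j₀ : n}
    (hH : Hᴴ * H = c • 1) (hc : c ≠ 0) (hrow : H i₀ = 1)
    {g : ρ → m} (hg : ∀ i ≠ i₀, i ∈ Set.range g)
    {f : ι → n} (hf : Function.Injective f) (hf₀ : j₀ ∉ Set.range f) :
    LinearIndependent K (H.submatrix g f)ᵀ := by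
  have hli : LinearIndependent K fun j : {j // j ≠ j₀} => fun r => H (g r) j := by
    rw [Fintype.linearIndependent_iff]
    intro w hw
    let u : n → K := fun j => if h : j = j₀ then 0 else w ⟨j, h⟩
    have hu₀ : u j₀ = 0 := dif_pos rfl
    have hu_ne (j : {j // j ≠ j₀}) : u j = w j := dif_neg j.2
    have hu : ∀ i ≠ i₀, (H *ᵥ u) i = 0 := by
      intro i hi
      obtain ⟨r, rfl⟩ := hg i hi
      simpa [mulVec, dotProduct, Fintype.sum_eq_add_sum_subtype_ne _ j₀, hu₀, hu_ne, mul_comm]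
        using congrFun hw r
    obtain ⟨a, ha⟩ := exists_eq_const_of_mulVec_eq_zero_off hH hc hrow hu
    intro j
    rw [← hu_ne, ha, ← ha j₀, hu₀]
  have hf' : Function.Injective fun a => (⟨f a, fun h => hf₀ ⟨a, h⟩⟩ : {j // j ≠ j₀}) :=
    fun a b hab => hf (congrArg Subtype.val hab)
  exact hli.comp _ hf'

theorem of_mul_conjTranspose_eq_smul_one {α β : Type*} [DecidableEq α] {C : Finset α}
    {D : Finset β} {h : α → β → K} {k : K}
    (hh : ∀ c ∈ C, ∀ c' ∈ C, ∑ d ∈ D, h c d * starRingEnd K (h c' d) = if c = c' then k else 0) :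
    (of fun (c : C) (d : D) => h c d) * (of fun (c : C) (d : D) => h c d)ᴴ = k • 1 := by
  ext c c'
  rw [mul_apply, Matrix.smul_apply, one_apply]
  simp only [conjTranspose_apply, of_apply, ← starRingEnd_apply]
  rw [Finset.sum_coe_sort D (fun d => h c d * starRingEnd K (h c' d)), hh c c.2 c' c'.2]
  simp only [Subtype.coe_inj, smul_eq_mul, mul_ite, mul_one, mul_zero]

end Matrix

open Matrix

theorem stmt13_general (p γ : ℕ) (C D : Finset (ZMod (p ^ γ)))
    (h0 : (0 : ZMod (p ^ γ)) ∈ C) (hcard : C.card = D.card)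
    (hHad : ∀ c ∈ C, ∀ c' ∈ C,
      ∑ d ∈ D, hadEntry p γ c d * (starRingEnd ℂ) (hadEntry p γ c' d)
        = if c = c' then (C.card : ℂ) else 0) :
    (∀ c ∈ C, c ≠ 0 → ∑ d ∈ D, hadEntry p γ c d = 0) ∧
    (∀ d₀ ∈ D, LinearIndependent ℂ
      (fun d : ↥(D.erase d₀) => fun c : ↥(C.erase 0) =>
        hadEntry p γ (c : ZMod (p ^ γ)) (d : ZMod (p ^ γ)))) ∧
    (∀ u : ↥D → ℂ,
      (∀ c ∈ C, c ≠ 0 → ∑ d ∈ D.attach, hadEntry p γ c (d : ZMod (p ^ γ)) * u d = 0) ↔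
      ∃ a : ℂ, ∀ d : ↥D, u d = a) := by
  classical
  let H : Matrix C D ℂ := Matrix.of fun c d => hadEntry p γ c d
  have hrow : H ⟨0, h0⟩ = 1 := funext fun d => by simp [H, hadEntry]
  have hc : (C.card : ℂ) ≠ 0 := Nat.cast_ne_zero.2 (Finset.card_ne_zero.2 ⟨0, h0⟩)
  have hrows : H * Hᴴ = (C.card : ℂ) • 1 := of_mul_conjTranspose_eq_smul_one hHad
  have hcols : Hᴴ * H = (C.card : ℂ) • 1 :=
    (mul_eq_smul_one_comm_of_equiv (Fintype.equivOfCardEq (by simp [hcard])) hc).1 hrows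
  have hker (u : D → ℂ) :
      (∀ c ∈ C, c ≠ 0 → ∑ d ∈ D.attach, hadEntry p γ c d * u d = 0) ↔ ∃ a, ∀ d, u d = a := by
    rw [← mulVec_eq_zero_off_iff_eq_const hrows hcols hc hrow]
    simp only [Subtype.forall, ne_eq, Subtype.mk.injEq]
    rfl
  refine ⟨fun c hc hc0 => ?_, fun d₀ hd₀ => ?_, hker⟩
  · have hsum := (hker 1).2 ⟨1, fun _ => rfl⟩ c hc hc0
    simp only [Pi.one_apply, mul_one] at hsum
    rwa [Finset.sum_attach D (hadEntry p γ c)] at hsum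
  · refine linearIndependent_submatrix_cols hcols hc hrow (j₀ := ⟨d₀, hd₀⟩)
      (g := fun c : C.erase 0 => ⟨c, Finset.mem_of_mem_erase c.2⟩) ?_
      (f := fun d : D.erase d₀ => ⟨d, Finset.mem_of_mem_erase d.2⟩) ?_ ?_
    · rintro ⟨i, hi⟩ hne
      exact ⟨⟨i, Finset.mem_erase.2 ⟨fun h => hne (Subtype.ext h), hi⟩⟩, rfl⟩
    · exact fun a b h => Subtype.ext (Subtype.mk.inj h)
    · rintro ⟨d, hd⟩
      exact Finset.ne_of_mem_erase d.2 (congrArg Subtype.val hd)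

/-- Let `H = (e^{2πi cd/p^γ})_{c∈C,d∈D}` be a square complex Hadamard matrix
with `0 ∈ C`, and let `H*` be obtained by deleting the row indexed by `0`. Then
the columns of `H*` sum to zero, any `#D - 1` of them are linearly independent,
and the kernel of `H*` is the one-dimensional span of the all-ones vector. -/
theorem stmt13 (p γ : ℕ) (hp : p.Prime) (C D : Finset (ZMod (p ^ γ)))
    (h0 : (0 : ZMod (p ^ γ)) ∈ C) (hcard : C.card = D.card)
    (hHad : ∀ c ∈ C, ∀ c' ∈ C,
      ∑ d ∈ D, hadEntry p γ c d * (starRingEnd ℂ) (hadEntry p γ c' d)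
        = if c = c' then (C.card : ℂ) else 0) :
    (∀ c ∈ C, c ≠ 0 → ∑ d ∈ D, hadEntry p γ c d = 0) ∧
    (∀ d₀ ∈ D, LinearIndependent ℂ
      (fun d : ↥(D.erase d₀) => fun c : ↥(C.erase 0) =>
        hadEntry p γ (c : ZMod (p ^ γ)) (d : ZMod (p ^ γ)))) ∧
    (∀ u : ↥D → ℂ,
      (∀ c ∈ C, c ≠ 0 → ∑ d ∈ D.attach, hadEntry p γ c (d : ZMod (p ^ γ)) * u d = 0) ↔
      ∃ a : ℂ, ∀ d : ↥D, u d = a) :=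
  stmt13_general p γ C D h0 hcard hHad
end

section
/- Let p be prime and let ν be a probability measure on ℤ_p that is the weak limit of the measures ν_γ = (1/#C_γ) Σ_{c ∈ C_γ} δ_c, where for each γ the set C_γ ⊂ {0,…,p^γ−1} is p-homogeneous of 𝒯_{I_γ, J_γ}-form with I_γ = I ∩ {0,…,γ−1} for a fixed infinite set I ⊂ ℕ, and the sets are nested (each element of C_{γ+1} reduces mod p^γ to an element of C_γ). Then for every x in the support of ν and every γ ≥ 0: ν(B(x, p^{-γ})) = p^{−#I_γ}, where #I_γ = #(I ∩ {0,…,γ−1}). -/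
/-!
The ball `B(x, p^{-γ})` is clopen, so its indicator is a bounded continuous test function and
`ν(B)` is the limit of the proportion of strings `t ∈ C_n` whose value lies in `B`. For `n ≥ γ`
the value of `t` lies in `B` exactly when `t` has a prescribed prefix of length `γ`, so these
strings are either none or all strings of `C_n` sharing a given prefix. Counting digit by
digit, such a prefix class of a `𝒯_{I,J}`-form set has `p^{#(I ∩ [γ, n))}` elements while `C_n`
has `p^{#(I ∩ [0, n))}`; hence the proportion is eventually `0` or `p^{-#I_γ}`, and the positive
limit `ν(B)` must be the latter.
-/

open scoped BigOperators
open MeasureTheory Filter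

/-- A nonempty set of digit strings `S ⊆ {0,…,p-1}^γ` is of `𝒯_{I,J}`-form
(`J` the complement of `I`): for positions `i ∈ I` the digit `t_i` takes every
value in `{0,…,p-1}` (for each prefix occurring in `S`), while for `i ∉ I` the
digit `t_i` is uniquely determined by the prefix `t_0⋯t_{i-1}`. -/
def IsTIJForm (p γ : ℕ) (I : Set ℕ) (S : Finset (Fin γ → Fin p)) : Prop :=
  S.Nonempty ∧
  (∀ t ∈ S, ∀ t' ∈ S, ∀ i : Fin γ, (i : ℕ) ∉ I →
      (∀ j : Fin γ, j < i → t j = t' j) → t i = t' i) ∧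
  (∀ t ∈ S, ∀ i : Fin γ, (i : ℕ) ∈ I → ∀ a : Fin p,
      ∃ s ∈ S, (∀ j : Fin γ, j < i → s j = t j) ∧ s i = a)

/-- The `p`-adic integer `Σ_i t_i p^i` with digits `t`. -/
noncomputable def digitValZ (p γ : ℕ) [Fact p.Prime] (t : Fin γ → Fin p) : ℤ_[p] :=
  ∑ i : Fin γ, ((t i : ℕ) : ℤ_[p]) * (p : ℤ_[p]) ^ (i : ℕ)

theorem Nat.modEq_pow_iff_forall_div_pow_mod {a c b k : ℕ} :
    a ≡ c [MOD b ^ k] ↔ ∀ i < k, a / b ^ i % b = c / b ^ i % b := by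
  constructor
  · intro h i hi
    have digit_eq : ∀ m, m / b ^ i % b = m % b ^ k / b ^ i % b := fun m => by
      rw [← Nat.sub_add_cancel hi.le, pow_add, Nat.mod_mul_left_div_self,
        Nat.mod_mod_of_dvd _ (dvd_pow_self b (by omega))]
    rw [digit_eq a, digit_eq c, h]
  · induction k with
    | zero => simp [Nat.ModEq, Nat.mod_one]
    | succ k ih =>
      intro h
      unfold Nat.ModEq at ih ⊢
      rw [Nat.mod_pow_succ, Nat.mod_pow_succ, ih fun i hi => h i (by omega), h k k.lt_succ_self]

theorem digitValZ_eq_natCast {p n : ℕ} [Fact p.Prime] (t : Fin n → Fin p) :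
    digitValZ p n t = ((finFunctionFinEquiv t : ℕ) : ℤ_[p]) := by
  simp [digitValZ]

theorem norm_digitValZ_sub_le_iff {p n k : ℕ} [Fact p.Prime] (hk : k ≤ n) (s t : Fin n → Fin p) :
    ‖digitValZ p n s - digitValZ p n t‖ ≤ (p : ℝ) ^ (-(k : ℤ)) ↔
      ∀ j : Fin n, (j : ℕ) < k → s j = t j := by
  have digit_eq (u : Fin n → Fin p) (j : Fin n) :
      (finFunctionFinEquiv u : ℕ) / p ^ (j : ℕ) % p = u j := by
    rw [← finFunctionFinEquiv_symm_apply_val, Equiv.symm_apply_apply]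
  have hsub : digitValZ p n s - digitValZ p n t
      = (((finFunctionFinEquiv s : ℕ) - (finFunctionFinEquiv t : ℕ) : ℤ) : ℤ_[p]) := by
    simp [digitValZ_eq_natCast]
  rw [hsub, PadicInt.norm_int_le_pow_iff_dvd, ← Nat.cast_pow, ← Nat.modEq_iff_dvd,
    Nat.modEq_pow_iff_forall_div_pow_mod]
  constructor
  · intro h j hj
    exact Fin.ext (by rw [← digit_eq, ← digit_eq, h j hj])
  · intro h i hi
    rw [digit_eq s ⟨i, by omega⟩, digit_eq t ⟨i, by omega⟩, h ⟨i, by omega⟩ hi]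

section PrefixFiber

variable {p n : ℕ}

def prefixFiber (S : Finset (Fin n → Fin p)) (k : ℕ) (t : Fin n → Fin p) :
    Finset (Fin n → Fin p) :=
  S.filter fun s => ∀ j : Fin n, (j : ℕ) < k → s j = t j

variable {S : Finset (Fin n → Fin p)} {k : ℕ} {t u : Fin n → Fin p}

theorem prefixFiber_eq_of_mem (hu : u ∈ prefixFiber S k t) :
    prefixFiber S k u = prefixFiber S k t := by
  simp only [prefixFiber, Finset.mem_filter] at hu ⊢
  ext s
  simp only [Finset.mem_filter, and_congr_right_iff]
  exact fun _ => forall₂_congr fun j hj => by rw [hu.2 j hj]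

theorem prefixFiber_succ (hk : k < n) :
    prefixFiber S (k + 1) t = (prefixFiber S k t).filter fun s => s ⟨k, hk⟩ = t ⟨k, hk⟩ := by
  ext s
  simp only [prefixFiber, Finset.mem_filter, and_assoc]
  refine and_congr_right fun _ => ⟨fun h => ⟨fun j hj => h j (by omega), h _ k.lt_succ_self⟩,
    fun ⟨h, hk'⟩ j hj => ?_⟩
  rcases Nat.lt_succ_iff_lt_or_eq.mp hj with hj | hj
  · exact h j hj
  · rwa [show j = ⟨k, hk⟩ from Fin.ext hj]

theorem prefixFiber_self (t : Fin n → Fin p) (ht : t ∈ S) : prefixFiber S n t = {t} := by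
  ext s
  simp only [prefixFiber, Finset.mem_filter, Finset.mem_singleton]
  exact ⟨fun h => funext fun j => h.2 j j.isLt, by rintro rfl; exact ⟨ht, fun _ _ => rfl⟩⟩

theorem prefixFiber_zero (t : Fin n → Fin p) : prefixFiber S 0 t = S := by
  simp [prefixFiber]

end PrefixFiber

section Count

variable {I : Set ℕ} {k n : ℕ}

theorem ncard_inter_Ico_of_notMem (hkI : k ∉ I) (hk : k < n) :
    (I ∩ Set.Ico k n).ncard = (I ∩ Set.Ico (k + 1) n).ncard := by
  rw [← Set.insert_Ico_add_one_left_eq_Ico hk, Set.inter_insert_of_notMem hkI]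

theorem ncard_inter_Ico_of_mem (hkI : k ∈ I) (hk : k < n) :
    (I ∩ Set.Ico k n).ncard = (I ∩ Set.Ico (k + 1) n).ncard + 1 := by
  rw [← Set.insert_Ico_add_one_left_eq_Ico hk, Set.inter_insert_of_mem hkI,
    Set.ncard_insert_of_notMem (by simp) ((Set.finite_Ico _ _).inter_of_right I)]

theorem ncard_inter_Iio_eq_add (hk : k ≤ n) :
    (I ∩ Set.Iio n).ncard = (I ∩ Set.Iio k).ncard + (I ∩ Set.Ico k n).ncard := by
  have hdisj : Disjoint (I ∩ Set.Iio k) (I ∩ Set.Ico k n) :=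
    Set.disjoint_left.2 fun _ hk' hk'' => (not_lt.2 hk''.2.1) hk'.2
  rw [← Set.ncard_union_eq hdisj
    ((Set.finite_Iio _).inter_of_right I) ((Set.finite_Ico _ _).inter_of_right I),
    ← Set.inter_union_distrib_left, Set.Iio_union_Ico_eq_Iio hk]

variable {p : ℕ} {S : Finset (Fin n → Fin p)}

theorem IsTIJForm.card_prefixFiber (hS : IsTIJForm p n I S) (hk : k ≤ n) :
    ∀ t ∈ S, (prefixFiber S k t).card = p ^ (I ∩ Set.Ico k n).ncard := by
  induction hk using Nat.decreasingInduction with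
  | self => intro t ht; simp [prefixFiber_self t ht]
  | of_succ k hk ih =>
    intro t ht
    by_cases hkI : k ∈ I
    · have card_slice (a : Fin p) : ((prefixFiber S k t).filter fun s => s ⟨k, hk⟩ = a).card
          = p ^ (I ∩ Set.Ico (k + 1) n).ncard := by
        obtain ⟨s, hs, hst, rfl⟩ := hS.2.2 t ht ⟨k, hk⟩ hkI a
        have hs' : s ∈ prefixFiber S k t := Finset.mem_filter.2 ⟨hs, fun j hj => hst j hj⟩
        rw [← prefixFiber_eq_of_mem hs', ← prefixFiber_succ hk, ih s hs]
      rw [Finset.card_eq_sum_card_fiberwise (f := fun s => s ⟨k, hk⟩) (t := Finset.univ)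
        (fun _ _ => Finset.mem_coe.2 (Finset.mem_univ _)),
        Finset.sum_congr rfl fun a _ => card_slice a,
        Finset.sum_const, Finset.card_univ, Fintype.card_fin, smul_eq_mul,
        ncard_inter_Ico_of_mem hkI hk, pow_succ, mul_comm]
    · rw [ncard_inter_Ico_of_notMem hkI hk, ← ih t ht, prefixFiber_succ hk,
        Finset.filter_true_of_mem]
      intro s hs
      obtain ⟨hsS, hst⟩ := Finset.mem_filter.1 hs
      exact hS.2.1 s hsS t ht ⟨k, hk⟩ hkI fun j hj => hst j hj

theorem IsTIJForm.card (hS : IsTIJForm p n I S) : S.card = p ^ (I ∩ Set.Iio n).ncard := by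
  obtain ⟨t, ht⟩ := hS.1
  rw [← prefixFiber_zero (S := S) t, hS.card_prefixFiber n.zero_le t ht, ← Set.Ico_bot]
  rfl

end Count

theorem tendsto_sum_indicator_div_card_of_tendsto_integral {X ι : Type*} [TopologicalSpace X]
    [CompactSpace X] [MeasurableSpace X] [OpensMeasurableSpace X] {ν : Measure X}
    {l : Filter ι} {T : ι → Type*} {S : ∀ i, Finset (T i)} {v : ∀ i, T i → X}
    (h : ∀ f : BoundedContinuousFunction X ℝ,
      Tendsto (fun i => (∑ t ∈ S i, f (v i t)) / ((S i).card : ℝ)) l (nhds (∫ x, f x ∂ν)))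
    {B : Set X} (hB : IsClopen B) :
    Tendsto (fun i => (∑ t ∈ S i, B.indicator 1 (v i t)) / ((S i).card : ℝ)) l
      (nhds (ν.real B)) := by
  simpa [integral_indicator_one hB.isClosed.measurableSet] using
    h (.mkOfCompact ⟨B.indicator 1, hB.continuous_indicator continuous_const⟩)

section Ball

variable {p n k : ℕ} [Fact p.Prime] {I : Set ℕ} {S : Finset (Fin n → Fin p)}

theorem filter_digitValZ_mem_closedBall_eq_prefixFiber (hk : k ≤ n) {x : ℤ_[p]} {s : Fin n → Fin p}
    (hs : digitValZ p n s ∈ Metric.closedBall x ((p : ℝ) ^ (-(k : ℤ))))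
    [DecidablePred fun t => digitValZ p n t ∈ Metric.closedBall x ((p : ℝ) ^ (-(k : ℤ)))] :
    S.filter (fun t => digitValZ p n t ∈ Metric.closedBall x ((p : ℝ) ^ (-(k : ℤ))))
      = prefixFiber S k s := by
  ext t
  simp only [prefixFiber, Finset.mem_filter]
  rw [IsUltrametricDist.closedBall_eq_of_mem hs, Metric.mem_closedBall, dist_eq_norm,
    norm_digitValZ_sub_le_iff hk]

theorem IsTIJForm.sum_indicator_closedBall_div_card_mem (hS : IsTIJForm p n I S) (hk : k ≤ n)
    (x : ℤ_[p]) :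
    (∑ t ∈ S, (Metric.closedBall x ((p : ℝ) ^ (-(k : ℤ)))).indicator 1 (digitValZ p n t))
        / (S.card : ℝ) ∈ ({0, ((p : ℝ) ^ (I ∩ Set.Iio k).ncard)⁻¹} : Set ℝ) := by
  classical
  have hp : (0 : ℝ) < p := by exact_mod_cast (Fact.out : p.Prime).pos
  simp only [Set.indicator_apply, Pi.one_apply, Finset.sum_boole, Set.mem_insert_iff,
    Set.mem_singleton_iff]
  by_cases hB : ∃ s ∈ S, digitValZ p n s ∈ Metric.closedBall x ((p : ℝ) ^ (-(k : ℤ)))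
  · obtain ⟨s, hs, hsB⟩ := hB
    right
    rw [filter_digitValZ_mem_closedBall_eq_prefixFiber hk hsB, hS.card_prefixFiber hk s hs, hS.card,
      ncard_inter_Iio_eq_add hk, pow_add]
    push_cast
    field_simp
  · left
    rw [Finset.filter_false_of_mem (by simpa using hB)]
    simp

end Ball

theorem stmt18_general (p : ℕ) [Fact p.Prime] [MeasurableSpace ℤ_[p]] [BorelSpace ℤ_[p]]
    (I : Set ℕ)
    (S : (γ : ℕ) → Finset (Fin γ → Fin p))
    (hform : ∀ γ : ℕ, IsTIJForm p γ I (S γ))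
    (ν : Measure ℤ_[p]) [IsProbabilityMeasure ν]
    (hweak : ∀ f : BoundedContinuousFunction ℤ_[p] ℝ,
      Tendsto (fun γ : ℕ => (∑ t ∈ S γ, f (digitValZ p γ t)) / ((S γ).card : ℝ))
        atTop (nhds (∫ x, f x ∂ν))) :
    ∀ x : ℤ_[p], (∀ γ : ℕ, ν {y : ℤ_[p] | ‖y - x‖ ≤ (p : ℝ) ^ (-(γ : ℤ))} ≠ 0) →
      ∀ γ : ℕ, ν {y : ℤ_[p] | ‖y - x‖ ≤ (p : ℝ) ^ (-(γ : ℤ))}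
        = ((p : ENNReal) ^ (Nat.card ↥(I ∩ Set.Iio γ)))⁻¹ := by
  intro x hx γ
  have hp : (0 : ℝ) < p := by exact_mod_cast (Fact.out : p.Prime).pos
  have hball : {y : ℤ_[p] | ‖y - x‖ ≤ (p : ℝ) ^ (-(γ : ℤ))}
      = Metric.closedBall x ((p : ℝ) ^ (-(γ : ℤ))) := by
    ext
    simp [dist_eq_norm]
  have hpos : ν.real (Metric.closedBall x ((p : ℝ) ^ (-(γ : ℤ)))) ≠ 0 := by
    rw [Ne, measureReal_eq_zero_iff, ← hball]
    exact hx γ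
  have hclopen : IsClopen (Metric.closedBall x ((p : ℝ) ^ (-(γ : ℤ)))) :=
    ⟨Metric.isClosed_closedBall, IsUltrametricDist.isOpen_closedBall x (by positivity)⟩
  have hval := (Set.toFinite _).isClosed.mem_of_tendsto
    (tendsto_sum_indicator_div_card_of_tendsto_integral hweak hclopen)
    ((eventually_ge_atTop γ).mono fun n hn => (hform n).sum_indicator_closedBall_div_card_mem hn x)
  rw [hball, Nat.card_coe_set_eq, ← ofReal_measureReal, hval.resolve_left hpos,
    ENNReal.ofReal_inv_of_pos (by positivity)]
  simp

/-- Let `ν` be a probability measure on `ℤ_p` that is the weak limit of the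
uniform measures on nested `p`-homogeneous sets `C_γ` of `𝒯_{I_γ,J_γ}`-form
(`I_γ = I ∩ {0,…,γ-1}`, `I ⊂ ℕ` infinite). Then for every `x` in the support of
`ν` and every `γ ≥ 0`, `ν(B(x, p^{-γ})) = p^{-#I_γ}`. -/
theorem stmt18 (p : ℕ) [Fact p.Prime] [MeasurableSpace ℤ_[p]] [BorelSpace ℤ_[p]]
    (I : Set ℕ) (hI : I.Infinite)
    (S : (γ : ℕ) → Finset (Fin γ → Fin p))
    (hform : ∀ γ : ℕ, IsTIJForm p γ I (S γ))
    (hnested : ∀ γ : ℕ, ∀ t ∈ S (γ + 1), (fun i : Fin γ => t i.castSucc) ∈ S γ)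
    (ν : Measure ℤ_[p]) [IsProbabilityMeasure ν]
    (hweak : ∀ f : BoundedContinuousFunction ℤ_[p] ℝ,
      Tendsto (fun γ : ℕ => (∑ t ∈ S γ, f (digitValZ p γ t)) / ((S γ).card : ℝ))
        atTop (nhds (∫ x, f x ∂ν))) :
    ∀ x : ℤ_[p], (∀ γ : ℕ, ν {y : ℤ_[p] | ‖y - x‖ ≤ (p : ℝ) ^ (-(γ : ℤ))} ≠ 0) →
      ∀ γ : ℕ, ν {y : ℤ_[p] | ‖y - x‖ ≤ (p : ℝ) ^ (-(γ : ℤ))}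
        = ((p : ENNReal) ^ (Nat.card ↥(I ∩ Set.Iio γ)))⁻¹ :=
  stmt18_general p I S hform ν hweak
end

section
/- Let p be a prime, I ⊂ ℕ an infinite set, and ν the singular measure on ℤ_p constructed as the weak limit of uniform measures on nested p-homogeneous sets C_γ of 𝒯_{I_γ,J_γ}-form (I_γ = I ∩ {0,…,γ−1}). Then the lower local dimension of ν at every point x of its support equals liminf_{γ→∞} #I_γ / γ, and consequently the lower Hausdorff dimension of ν equals liminf_{γ→∞} #(I ∩ {0,…,γ−1})/γ. -/
open scoped BigOperators
open MeasureTheory Filter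

/-- The lower local dimension of `ν` at `x`:
`liminf_{r→0⁺} log ν(B(x,r)) / log r`. -/
noncomputable def lowerLocalDim (p : ℕ) [Fact p.Prime] [MeasurableSpace ℤ_[p]]
    (ν : Measure ℤ_[p]) (x : ℤ_[p]) : ℝ :=
  Filter.liminf
    (fun r : ℝ => Real.log (ν {y : ℤ_[p] | ‖y - x‖ ≤ r}).toReal / Real.log r)
    (nhdsWithin 0 (Set.Ioi 0))

/-!
In `ℤ_p` every closed ball of radius `r > 0` equals the ball of radius `p ^ (-γ)` with
`γ = ⌈-log_p r⌉`. At a point of the support, `log ν(B(x, r)) / log r = #I_γ / (-log_p r)` is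
therefore at least `#I_γ / γ`, with equality at `r = p ^ (-γ)`, and the two liminfs agree.

For the Hausdorff dimension, note that a ball meeting the support is centred in the support
(ultrametric inequality), so every ball of radius `p ^ (-γ)` has mass at most `p ^ (-#I_γ)`.
If `d < liminf #I_γ / γ` this is eventually `≤ (p ^ (-γ)) ^ d`, and the mass distribution
principle gives `ν ≤ 𝓗^d`, hence `dim_H A ≥ d` whenever `ν A > 0`. If `d > liminf #I_γ / γ`,
then for infinitely many `γ` the support is covered by disjoint balls of radius `p ^ (-γ)`,
each of mass `p ^ (-#I_γ) ≥ (p ^ (-γ)) ^ d`; so `𝓗^d (supp ν) ≤ 1` and `dim_H (supp ν) ≤ d`.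
The support has full measure, which gives the upper bound on the infimum.
-/

open Set Metric
open scoped ENNReal NNReal Topology

/-- For `0 < r < 1` this is the `γ ≥ 1` with `p ^ (-γ) ≤ r < p ^ (-γ + 1)`. -/
noncomputable def padicScale (p : ℕ) (r : ℝ) : ℕ := ⌈-Real.logb p r⌉₊

lemma neg_logb_le_padicScale (p : ℕ) (r : ℝ) : -Real.logb p r ≤ padicScale p r := Nat.le_ceil _

lemma one_lt_prime_cast (p : ℕ) [hp : Fact p.Prime] : (1 : ℝ) < p := by exact_mod_cast hp.out.one_lt

lemma prime_cast_pos (p : ℕ) [Fact p.Prime] : (0 : ℝ) < p := zero_lt_one.trans (one_lt_prime_cast p)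

section PadicScale

variable {p : ℕ} [Fact p.Prime]

lemma logb_zpow_self (k : ℤ) : Real.logb p ((p : ℝ) ^ k) = k := by
  rw [← Real.rpow_intCast, Real.logb_rpow (prime_cast_pos p) (one_lt_prime_cast p).ne']

lemma zpow_neg_padicScale_le {r : ℝ} (hr : 0 < r) : (p : ℝ) ^ (-(padicScale p r : ℤ)) ≤ r := by
  rw [← Real.logb_le_logb (one_lt_prime_cast p) (zpow_pos (prime_cast_pos p) _) hr, logb_zpow_self]
  push_cast
  linarith [neg_logb_le_padicScale p r]

lemma lt_zpow_neg_padicScale_add_one {r : ℝ} (hr : 0 < r) (hr1 : r < 1) :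
    r < (p : ℝ) ^ (-(padicScale p r : ℤ) + 1) := by
  rw [← Real.logb_lt_logb_iff (one_lt_prime_cast p) hr (zpow_pos (prime_cast_pos p) _),
    logb_zpow_self]
  have := Nat.ceil_lt_add_one (neg_nonneg.2 (Real.logb_neg (one_lt_prime_cast p) hr hr1).le)
  push_cast
  unfold padicScale
  linarith

lemma padicScale_zpow_neg (γ : ℕ) : padicScale p ((p : ℝ) ^ (-(γ : ℤ))) = γ := by
  rw [padicScale, logb_zpow_self]
  simp

lemma le_padicScale {r : ℝ} {γ : ℕ} (hr : 0 < r) (h : r ≤ (p : ℝ) ^ (-(γ : ℤ))) :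
    γ ≤ padicScale p r := by
  rw [← padicScale_zpow_neg (p := p) γ]
  exact Nat.ceil_mono (neg_le_neg (Real.logb_le_logb_of_le (one_lt_prime_cast p) hr h))

lemma tendsto_padicScale : Tendsto (padicScale p) (𝓝[>] 0) atTop :=
  tendsto_nat_ceil_atTop.comp (tendsto_neg_atBot_atTop.comp
    (Real.tendsto_logb_nhdsGT_zero (one_lt_prime_cast p)))

lemma tendsto_zpow_neg_nhdsGT : Tendsto (fun γ : ℕ => (p : ℝ) ^ (-(γ : ℤ))) atTop (𝓝[>] 0) := by
  refine tendsto_nhdsWithin_of_tendsto_nhds_of_eventually_within _ ?_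
    (Eventually.of_forall fun γ => zpow_pos (prime_cast_pos p) _)
  simp only [zpow_neg, zpow_natCast, ← inv_pow]
  exact tendsto_pow_atTop_nhds_zero_of_lt_one (by positivity)
    (inv_lt_one_of_one_lt₀ (one_lt_prime_cast p))

end PadicScale

lemma Filter.liminf_eq_of_le_comp {α : Type*} {l : Filter α} {f : α → ℝ} {g : ℕ → ℝ}
    {u : ℕ → α} {Γ : α → ℕ} {a b : ℝ} (hu : Tendsto u atTop l) (hΓ : Tendsto Γ l atTop)
    (hfu : ∀ᶠ γ in atTop, f (u γ) = g γ) (hgΓ : ∀ᶠ x in l, g (Γ x) ≤ f x)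
    (hg : ∀ γ, g γ ∈ Icc a b) :
    liminf f l = liminf g atTop := by
  have : l.NeBot := hu.neBot
  have hf_bdd : IsBoundedUnder (· ≥ ·) l f := ⟨a, hgΓ.mono fun x hx => (hg _).1.trans hx⟩
  have hf_cobdd : IsCoboundedUnder (· ≥ ·) l f :=
    IsCoboundedUnder.of_frequently_le (a := b)
      (hu.frequently (hfu.mono fun γ hγ => hγ ▸ (hg γ).2).frequently)
  have hgΓ_bdd : IsBoundedUnder (· ≥ ·) l (g ∘ Γ) := isBoundedUnder_of ⟨a, fun x => (hg _).1⟩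
  apply le_antisymm
  · calc liminf f l ≤ liminf (f ∘ u) atTop :=
          hu.liminf_le_liminf_comp (IsCoboundedUnder.of_frequently_le (a := b)
            (frequently_map.2 (hfu.mono fun γ hγ => hγ ▸ (hg γ).2).frequently))
      _ = liminf g atTop := liminf_congr hfu
  · calc liminf g atTop ≤ liminf (g ∘ Γ) l :=
          hΓ.liminf_le_liminf_comp (isCoboundedUnder_ge_of_le _ fun γ => (hg γ).2)
            (isBoundedUnder_of ⟨a, fun γ => (hg γ).1⟩)
      _ ≤ liminf f l := liminf_le_liminf hgΓ hgΓ_bdd hf_cobdd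

section PadicBalls

variable {p : ℕ} [Fact p.Prime]

lemma PadicInt.norm_le_iff_le_zpow_neg_padicScale (z : ℤ_[p]) {r : ℝ} (hr : 0 < r) :
    ‖z‖ ≤ r ↔ ‖z‖ ≤ (p : ℝ) ^ (-(padicScale p r : ℤ)) := by
  refine ⟨fun hz => ?_, fun hz => hz.trans (zpow_neg_padicScale_le hr)⟩
  rcases lt_or_ge r 1 with hr1 | hr1
  · rw [PadicInt.norm_le_pow_iff_norm_lt_pow_add_one]
    exact hz.trans_lt (lt_zpow_neg_padicScale_add_one hr hr1)
  · have : padicScale p r = 0 :=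
      Nat.ceil_eq_zero.2 (neg_nonpos.2 (Real.logb_nonneg (one_lt_prime_cast p) hr1))
    simpa [this] using z.norm_le_one

lemma PadicInt.closedBall_eq_closedBall_padicScale (x : ℤ_[p]) {r : ℝ} (hr : 0 < r) :
    closedBall x r = closedBall x ((p : ℝ) ^ (-(padicScale p r : ℤ))) := by
  ext y
  simp only [mem_closedBall, dist_eq_norm]
  exact (y - x).norm_le_iff_le_zpow_neg_padicScale hr

lemma PadicInt.nhds_basis_closedBall_zpow (x : ℤ_[p]) :
    (𝓝 x).HasBasis (fun _ => True) fun γ : ℕ => closedBall x ((p : ℝ) ^ (-(γ : ℤ))) := by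
  simpa only [zpow_neg, zpow_natCast, inv_pow] using
    nhds_basis_closedBall_pow (inv_pos.2 (prime_cast_pos p))
      (inv_lt_one_of_one_lt₀ (one_lt_prime_cast p))

lemma PadicInt.mem_support_iff [MeasurableSpace ℤ_[p]] (μ : Measure ℤ_[p]) (x : ℤ_[p]) :
    x ∈ μ.support ↔ ∀ γ : ℕ, μ (closedBall x ((p : ℝ) ^ (-(γ : ℤ)))) ≠ 0 := by
  simp [(PadicInt.nhds_basis_closedBall_zpow x).mem_measureSupport, pos_iff_ne_zero]

end PadicBalls

section Ultrametric

variable {X : Type*} [MetricSpace X] [IsUltrametricDist X]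

lemma IsUltrametricDist.ediam_closedBall_le (x : X) (r : ℝ) :
    ediam (closedBall x r) ≤ ENNReal.ofReal r :=
  ediam_le_of_forall_dist_le fun y hy z hz =>
    (dist_triangle_max y x z).trans (max_le hy (by rwa [dist_comm]))

lemma IsUltrametricDist.measure_closedBall_le_of_forall_mem_support [MeasurableSpace X]
    [HereditarilyLindelofSpace X] {μ : Measure X} {r : ℝ} {c : ℝ≥0∞}
    (h : ∀ x ∈ μ.support, μ (closedBall x r) = c) (x : X) : μ (closedBall x r) ≤ c := by
  rcases eq_zero_or_pos (μ (closedBall x r)) with h0 | hpos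
  · simp [h0]
  obtain ⟨y, hy, hys⟩ := Measure.nonempty_inter_support_of_pos hpos
  rw [closedBall_eq_of_mem hy, h y hys]

end Ultrametric

section LocalDimension

variable {p : ℕ} [Fact p.Prime] [MeasurableSpace ℤ_[p]]

lemma log_measure_closedBall_div_log_eq {ν : Measure ℤ_[p]} {x : ℤ_[p]} {n : ℕ → ℕ}
    (hx : ∀ γ : ℕ, ν (closedBall x ((p : ℝ) ^ (-(γ : ℤ)))) = ((p : ℝ≥0∞) ^ n γ)⁻¹)
    {r : ℝ} (hr : 0 < r) :
    Real.log (ν (closedBall x r)).toReal / Real.log r = n (padicScale p r) / -Real.logb p r := by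
  rw [x.closedBall_eq_closedBall_padicScale hr, hx, ENNReal.toReal_inv, ENNReal.toReal_pow,
    ENNReal.toReal_natCast, Real.log_inv, Real.log_pow, ← Real.log_div_log, neg_div',
    div_div_eq_mul_div]
  have := Real.log_pos (one_lt_prime_cast p)
  field_simp

theorem lowerLocalDim_eq_liminf (ν : Measure ℤ_[p]) (x : ℤ_[p]) (n : ℕ → ℕ) (hn : ∀ γ, n γ ≤ γ)
    (hx : ∀ γ : ℕ, ν (closedBall x ((p : ℝ) ^ (-(γ : ℤ)))) = ((p : ℝ≥0∞) ^ n γ)⁻¹) :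
    lowerLocalDim p ν x = liminf (fun γ : ℕ => (n γ : ℝ) / γ) atTop := by
  refine liminf_eq_of_le_comp (tendsto_zpow_neg_nhdsGT (p := p))
    (tendsto_padicScale (p := p))
    (Eventually.of_forall fun γ => ?_) ?_ (a := 0) (b := 1) fun γ => ?_
  · change Real.log (ν (closedBall x _)).toReal / _ = _
    rw [log_measure_closedBall_div_log_eq hx (zpow_pos (prime_cast_pos p) _), padicScale_zpow_neg,
      logb_zpow_self]
    push_cast
    rw [neg_neg]
  · filter_upwards [Ioo_mem_nhdsGT one_pos] with r hr
    change _ ≤ Real.log (ν (closedBall x r)).toReal / Real.log r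
    rw [log_measure_closedBall_div_log_eq hx hr.1]
    exact div_le_div_of_nonneg_left (Nat.cast_nonneg _)
      (neg_pos.2 (Real.logb_neg (one_lt_prime_cast p) hr.1 hr.2)) (neg_logb_le_padicScale p r)
  · exact ⟨by positivity, div_le_one_of_le₀ (by exact_mod_cast hn γ) (Nat.cast_nonneg _)⟩

end LocalDimension

section HausdorffMeasure

variable {X : Type*} [MetricSpace X]

lemma subset_closedBall_of_ediam_le {s : Set X} {x : X} (hx : x ∈ s) (hs : ediam s ≠ ⊤)
    {r : ℝ} (hr : (ediam s).toReal ≤ r) : s ⊆ closedBall x r := fun y hy => by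
  rw [mem_closedBall, dist_edist]
  exact (ENNReal.toReal_mono hs (edist_le_ediam_of_mem hy hx)).trans hr

variable [MeasurableSpace X] [BorelSpace X]

theorem le_hausdorffMeasure_of_measure_closedBall_le (μ : Measure X) (d : ℝ) {r₀ : ℝ}
    (hr₀ : 0 < r₀) (h : ∀ x r, 0 < r → r ≤ r₀ → μ (closedBall x r) ≤ ENNReal.ofReal r ^ d) :
    μ ≤ μH[d] := by
  refine Measure.le_hausdorffMeasure d μ (ENNReal.ofReal r₀) (by simpa) fun s hs => ?_
  rcases s.eq_empty_or_nonempty with rfl | ⟨x, hx⟩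
  · simp
  have hs_top : ediam s ≠ ⊤ := ne_top_of_le_ne_top ENNReal.ofReal_ne_top hs
  rcases eq_or_ne (ediam s) 0 with hs0 | hs0
  · have hlim : Tendsto (fun r => ENNReal.ofReal r ^ d) (𝓝[>] 0) (𝓝 (ediam s ^ d)) := by
      rw [hs0, ← ENNReal.ofReal_zero]
      exact (ENNReal.continuous_rpow_const.tendsto _).comp
        (ENNReal.tendsto_ofReal nhdsWithin_le_nhds)
    refine ge_of_tendsto hlim ?_
    filter_upwards [Ioc_mem_nhdsGT hr₀] with r hr
    refine (measure_mono (subset_closedBall_of_ediam_le hx hs_top ?_)).trans (h x r hr.1 hr.2)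
    simpa [hs0] using hr.1.le
  · calc μ s ≤ μ (closedBall x (ediam s).toReal) :=
          measure_mono (subset_closedBall_of_ediam_le hx hs_top le_rfl)
      _ ≤ ENNReal.ofReal (ediam s).toReal ^ d :=
          h x _ (ENNReal.toReal_pos hs0 hs_top) (ENNReal.toReal_le_of_le_ofReal hr₀.le hs)
      _ = ediam s ^ d := by rw [ENNReal.ofReal_toReal hs_top]

theorem hausdorffMeasure_le_measure_univ_of_le_measure_closedBall [IsUltrametricDist X]
    [TopologicalSpace.SeparableSpace X] (μ : Measure X) (s : Set X) {d : ℝ≥0} {β : Type*}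
    {l : Filter β} [l.NeBot] {ρ : β → ℝ} (hρ_pos : ∀ b, 0 < ρ b) (hρ : Tendsto ρ l (𝓝 0))
    (h : ∀ᶠ b in l, ∀ x ∈ s, ENNReal.ofReal (ρ b) ^ (d : ℝ) ≤ μ (closedBall x (ρ b))) :
    μH[d] s ≤ μ univ := by
  set balls : β → Set (Set X) := fun b => (closedBall · (ρ b)) '' s
  have hdisj : ∀ b, (balls b).PairwiseDisjoint id := by
    rintro b _ ⟨x, -, rfl⟩ _ ⟨y, -, rfl⟩ hne
    exact (IsUltrametricDist.closedBall_eq_or_disjoint x y _).resolve_left hne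
  have : ∀ b, Countable (balls b) := fun b =>
    ((hdisj b).countable_of_isOpen
      (by rintro _ ⟨x, -, rfl⟩; exact IsUltrametricDist.isOpen_closedBall x (hρ_pos b).ne')
      (by rintro _ ⟨x, -, rfl⟩; exact ⟨x, mem_closedBall_self (hρ_pos b).le⟩)).to_subtype
  have hsum : ∀ᶠ b in l, ∑' B : balls b, ediam (B : Set X) ^ (d : ℝ) ≤ μ univ := by
    filter_upwards [h] with b hb
    calc ∑' B : balls b, ediam (B : Set X) ^ (d : ℝ) ≤ ∑' B : balls b, μ B := by
          refine ENNReal.tsum_le_tsum fun ⟨_, x, hx, rfl⟩ => ?_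
          exact (ENNReal.rpow_le_rpow (IsUltrametricDist.ediam_closedBall_le x _) d.2).trans
            (hb x hx)
      _ ≤ μ univ := tsum_measure_le_measure_univ
          (fun ⟨_, x, _, rfl⟩ => measurableSet_closedBall.nullMeasurableSet)
          fun B B' hBB' => (hdisj b B.2 B'.2 (Subtype.coe_injective.ne hBB')).aedisjoint
  calc μH[d] s ≤ liminf (fun b => ∑' B : balls b, ediam (B : Set X) ^ (d : ℝ)) l :=
        Measure.hausdorffMeasure_le_liminf_tsum (ι := fun b => balls b) _ s
          (fun b => ENNReal.ofReal (ρ b))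
          (by simpa using ENNReal.tendsto_ofReal hρ) (fun b B => B)
          (Eventually.of_forall fun b ⟨_, x, _, rfl⟩ => IsUltrametricDist.ediam_closedBall_le x _)
          (Eventually.of_forall fun b x hx =>
            mem_iUnion.2 ⟨⟨_, x, hx, rfl⟩, mem_closedBall_self (hρ_pos b).le⟩)
    _ ≤ μ univ := liminf_le_of_frequently_le' hsum.frequently

end HausdorffMeasure

section DimensionBounds

variable {p : ℕ} [Fact p.Prime]

lemma ofReal_zpow_neg_rpow (γ : ℕ) (d : ℝ) :
    ENNReal.ofReal ((p : ℝ) ^ (-(γ : ℤ))) ^ d = (p : ℝ≥0∞) ^ (-(d * γ)) := by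
  rw [ENNReal.ofReal_rpow_of_pos (zpow_pos (prime_cast_pos p) _), ← Real.rpow_intCast,
    ← Real.rpow_mul (prime_cast_pos p).le, ← ENNReal.ofReal_rpow_of_pos (prime_cast_pos p)]
  simp [mul_comm]

lemma one_le_prime_cast_ennreal : (1 : ℝ≥0∞) ≤ p := by exact_mod_cast (Fact.out : p.Prime).one_le

variable [MeasurableSpace ℤ_[p]] [BorelSpace ℤ_[p]] {ν : Measure ℤ_[p]} {n : ℕ → ℕ}

theorem le_dimH_of_measure_ne_zero
    (hν : ∀ x ∈ ν.support, ∀ γ : ℕ,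
      ν (closedBall x ((p : ℝ) ^ (-(γ : ℤ)))) = ((p : ℝ≥0∞) ^ n γ)⁻¹)
    {d : ℝ≥0} (hd : ∀ᶠ γ in atTop, (d : ℝ) * γ ≤ n γ) {A : Set ℤ_[p]} (hA : ν A ≠ 0) :
    (d : ℝ≥0∞) ≤ dimH A := by
  obtain ⟨γ₀, hγ₀⟩ := eventually_atTop.1 hd
  have hball : ∀ x r, 0 < r → r ≤ (p : ℝ) ^ (-(γ₀ : ℤ)) →
      ν (closedBall x r) ≤ ENNReal.ofReal r ^ (d : ℝ) := by
    intro x r hr hrγ₀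
    set γ := padicScale p r
    calc ν (closedBall x r) = ν (closedBall x ((p : ℝ) ^ (-(γ : ℤ)))) := by
          rw [x.closedBall_eq_closedBall_padicScale hr]
      _ ≤ ((p : ℝ≥0∞) ^ n γ)⁻¹ :=
          IsUltrametricDist.measure_closedBall_le_of_forall_mem_support (fun y hy => hν y hy γ) x
      _ ≤ ENNReal.ofReal ((p : ℝ) ^ (-(γ : ℤ))) ^ (d : ℝ) := by
          rw [← ENNReal.rpow_natCast, ← ENNReal.rpow_neg, ofReal_zpow_neg_rpow]
          exact ENNReal.rpow_le_rpow_of_exponent_le one_le_prime_cast_ennreal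
            (neg_le_neg (hγ₀ γ (le_padicScale hr hrγ₀)))
      _ ≤ ENNReal.ofReal r ^ (d : ℝ) :=
          ENNReal.rpow_le_rpow (ENNReal.ofReal_le_ofReal (zpow_neg_padicScale_le hr)) d.2
  have hν_le := le_hausdorffMeasure_of_measure_closedBall_le ν d
    (zpow_pos (prime_cast_pos p) _) hball
  refine le_dimH_of_hausdorffMeasure_ne_zero fun h0 => hA ?_
  exact nonpos_iff_eq_zero.1 (h0 ▸ Measure.le_iff'.1 hν_le A)

theorem dimH_support_le [IsFiniteMeasure ν]
    (hν : ∀ x ∈ ν.support, ∀ γ : ℕ,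
      ν (closedBall x ((p : ℝ) ^ (-(γ : ℤ)))) = ((p : ℝ≥0∞) ^ n γ)⁻¹)
    {d : ℝ≥0} (hd : ∃ᶠ γ in atTop, (n γ : ℝ) ≤ d * γ) :
    dimH ν.support ≤ d := by
  have := frequently_iff_neBot.1 hd
  refine dimH_le_of_hausdorffMeasure_ne_top (ne_top_of_le_ne_top (measure_ne_top ν univ) ?_)
  refine hausdorffMeasure_le_measure_univ_of_le_measure_closedBall ν ν.support
    (l := atTop ⊓ 𝓟 {γ | (n γ : ℝ) ≤ d * γ})
    (fun _ => zpow_pos (prime_cast_pos p) _)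
    (tendsto_nhds_of_tendsto_nhdsWithin (tendsto_zpow_neg_nhdsGT.mono_left inf_le_left))
    (eventually_inf_principal.2 (Eventually.of_forall fun γ hγ x hx => ?_))
  rw [hν x hx, ← ENNReal.rpow_natCast, ← ENNReal.rpow_neg, ofReal_zpow_neg_rpow]
  exact ENNReal.rpow_le_rpow_of_exponent_le one_le_prime_cast_ennreal (neg_le_neg hγ)

end DimensionBounds

lemma frequently_le_mul_of_liminf_div_lt {n : ℕ → ℕ} (hn : ∀ γ, n γ ≤ γ) {d : ℝ}
    (h : liminf (fun γ : ℕ => (n γ : ℝ) / γ) atTop < d) : ∃ᶠ γ in atTop, (n γ : ℝ) ≤ d * γ := by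
  have hcobdd : IsCoboundedUnder (· ≥ ·) atTop fun γ : ℕ => (n γ : ℝ) / γ :=
    isCoboundedUnder_ge_of_le _ fun γ => div_le_one_of_le₀ (by exact_mod_cast hn γ) γ.cast_nonneg
  refine ((frequently_lt_of_liminf_lt hcobdd h).and_eventually (eventually_gt_atTop 0)).mono ?_
  rintro γ ⟨hγ, hγ_pos⟩
  exact ((div_lt_iff₀ (Nat.cast_pos.2 hγ_pos)).1 hγ).le

lemma eventually_mul_le_of_lt_liminf_div {n : ℕ → ℕ} {d : ℝ}
    (h : d < liminf (fun γ : ℕ => (n γ : ℝ) / γ) atTop) : ∀ᶠ γ in atTop, d * γ ≤ n γ := by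
  have hbdd : IsBoundedUnder (· ≥ ·) atTop fun γ : ℕ => (n γ : ℝ) / γ :=
    isBoundedUnder_of ⟨0, fun γ => by positivity⟩
  filter_upwards [eventually_lt_of_lt_liminf h hbdd, eventually_gt_atTop 0] with γ hγ hγ_pos
  exact ((lt_div_iff₀ (Nat.cast_pos.2 hγ_pos)).1 hγ).le

lemma Nat.card_inter_Iio_le (I : Set ℕ) (γ : ℕ) : Nat.card ↥(I ∩ Iio γ) ≤ γ := by
  calc Nat.card ↥(I ∩ Iio γ) ≤ Nat.card ↥(Iio γ) :=
        Nat.card_mono (finite_Iio γ) inter_subset_right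
    _ = γ := by simp

theorem stmt19_general (p : ℕ) [Fact p.Prime] [MeasurableSpace ℤ_[p]] [BorelSpace ℤ_[p]]
    (I : Set ℕ)
    (ν : Measure ℤ_[p]) [IsProbabilityMeasure ν]
    (hball : ∀ x : ℤ_[p], (∀ γ : ℕ, ν {y : ℤ_[p] | ‖y - x‖ ≤ (p : ℝ) ^ (-(γ : ℤ))} ≠ 0) →
      ∀ γ : ℕ, ν {y : ℤ_[p] | ‖y - x‖ ≤ (p : ℝ) ^ (-(γ : ℤ))}
        = ((p : ENNReal) ^ (Nat.card ↥(I ∩ Set.Iio γ)))⁻¹) :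
    (∀ x : ℤ_[p], (∀ γ : ℕ, ν {y : ℤ_[p] | ‖y - x‖ ≤ (p : ℝ) ^ (-(γ : ℤ))} ≠ 0) →
      lowerLocalDim p ν x
        = Filter.liminf (fun γ : ℕ => (Nat.card ↥(I ∩ Set.Iio γ) : ℝ) / γ) atTop) ∧
    (⨅ (A : Set ℤ_[p]) (_ : ν A ≠ 0), dimH A)
      = ENNReal.ofReal
          (Filter.liminf (fun γ : ℕ => (Nat.card ↥(I ∩ Set.Iio γ) : ℝ) / γ) atTop) := by
  set n : ℕ → ℕ := fun γ => Nat.card ↥(I ∩ Iio γ)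
  have hn : ∀ γ, n γ ≤ γ := Nat.card_inter_Iio_le I
  have hν : ∀ x ∈ ν.support, ∀ γ : ℕ,
      ν (closedBall x ((p : ℝ) ^ (-(γ : ℤ)))) = ((p : ℝ≥0∞) ^ n γ)⁻¹ :=
    fun x hx => hball x ((PadicInt.mem_support_iff ν x).1 hx)
  refine ⟨fun x hx => lowerLocalDim_eq_liminf ν x n hn (hball x hx), le_antisymm ?_ ?_⟩
  · refine le_of_forall_gt fun c hc => ?_
    obtain ⟨d, hLd, hdc⟩ := ENNReal.lt_iff_exists_nnreal_btwn.1 hc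
    rw [← ENNReal.ofReal_coe_nnreal, ENNReal.ofReal_lt_ofReal_iff'] at hLd
    have hsupp : ν ν.support ≠ 0 := by
      rw [measure_congr (ae_eq_univ.2 Measure.measure_compl_support), measure_univ]
      exact one_ne_zero
    calc ⨅ (A : Set ℤ_[p]) (_ : ν A ≠ 0), dimH A ≤ dimH ν.support :=
          iInf₂_le (f := fun A (_ : ν A ≠ 0) => dimH A) _ hsupp
      _ ≤ d := dimH_support_le hν (frequently_le_mul_of_liminf_div_lt hn hLd.1)
      _ < c := hdc
  · refine le_iInf₂ fun A hA => le_of_forall_lt fun c hc => ?_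
    obtain ⟨d, hcd, hdL⟩ := ENNReal.lt_iff_exists_nnreal_btwn.1 hc
    rw [ENNReal.coe_lt_ofReal] at hdL
    exact hcd.trans_le (le_dimH_of_measure_ne_zero hν (eventually_mul_le_of_lt_liminf_div hdL) hA)

/-- Let `ν` be the singular probability measure on `ℤ_p` obtained as the weak
limit of the uniform measures on nested `p`-homogeneous sets `C_γ` of
`𝒯_{I_γ,J_γ}`-form (`I_γ = I ∩ {0,…,γ-1}`, `I ⊂ ℕ` infinite); it satisfies
`ν(B(x, p^{-γ})) = p^{-#I_γ}` for `x` in its support. Then the lower local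
dimension of `ν` at every point of its support equals
`liminf_γ #I_γ/γ`, and consequently the lower Hausdorff dimension of `ν`
(namely `inf{dim_H A : ν(A) > 0}`) equals `liminf_γ #(I ∩ {0,…,γ-1})/γ`. -/
theorem stmt19 (p : ℕ) [Fact p.Prime] [MeasurableSpace ℤ_[p]] [BorelSpace ℤ_[p]]
    (I : Set ℕ) (hI : I.Infinite)
    (S : (γ : ℕ) → Finset (Fin γ → Fin p))
    (hform : ∀ γ : ℕ, IsTIJForm p γ I (S γ))
    (hnested : ∀ γ : ℕ, ∀ t ∈ S (γ + 1), (fun i : Fin γ => t i.castSucc) ∈ S γ)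
    (ν : Measure ℤ_[p]) [IsProbabilityMeasure ν]
    (hweak : ∀ f : BoundedContinuousFunction ℤ_[p] ℝ,
      Tendsto (fun γ : ℕ => (∑ t ∈ S γ, f (digitValZ p γ t)) / ((S γ).card : ℝ))
        atTop (nhds (∫ x, f x ∂ν)))
    (hball : ∀ x : ℤ_[p], (∀ γ : ℕ, ν {y : ℤ_[p] | ‖y - x‖ ≤ (p : ℝ) ^ (-(γ : ℤ))} ≠ 0) →
      ∀ γ : ℕ, ν {y : ℤ_[p] | ‖y - x‖ ≤ (p : ℝ) ^ (-(γ : ℤ))}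
        = ((p : ENNReal) ^ (Nat.card ↥(I ∩ Set.Iio γ)))⁻¹) :
    (∀ x : ℤ_[p], (∀ γ : ℕ, ν {y : ℤ_[p] | ‖y - x‖ ≤ (p : ℝ) ^ (-(γ : ℤ))} ≠ 0) →
      lowerLocalDim p ν x
        = Filter.liminf (fun γ : ℕ => (Nat.card ↥(I ∩ Set.Iio γ) : ℝ) / γ) atTop) ∧
    (⨅ (A : Set ℤ_[p]) (_ : ν A ≠ 0), dimH A)
      = ENNReal.ofReal
          (Filter.liminf (fun γ : ℕ => (Nat.card ↥(I ∩ Set.Iio γ) : ℝ) / γ) atTop) :=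
  stmt19_general p I ν hball
end
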